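/- arXiv:0806.0043 — 2 statements merged into one kernel-verified Lean document; each statement's English description precedes it below -/
import Mathlib

section
/- Let s be a word of length 2 that is a suffix of f(a) for some letter a ∈ A₄, and let b ∈ A₄. If the word s·b (of length 3) occurs in w at positions i ≥ 1 and j ≥ 1, then the preceding letters agree: w(i−1) = w(j−1). In other words, the letter preceding any occurrence of s·b in w is uniquely determined. -/
/-!
Since `w` is the fixed point of the 3-uniform morphism `f`, its letter at `3k + r` is the
`r`-th letter of `f(w k)`: positions `≡ 0 (mod 3)` carry `1` and positions `≡ 1` carry `2`
or `4`. An occurrence of `s·b` starts with the middle letter (`2` or `4`) of some `f(a)`,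
hence at a position `≡ 1` or `≡ 2`, and `b` tells the two cases apart: `b = 1` exactly in
the first. In the first case the preceding letter is `1`; in the second the occurrence starts
with the last letter of `f(w k)`, and `4` is the only letter whose image `142` ends in `2` or
`4`, so the preceding letter is `4`.
-/

/-- The four-letter alphabet `A₄ = {1,2,3,4}`; the value `k : Fin 4` represents letter `k+1`. -/
abbrev A4 := Fin 4

/-- The morphism `f` on letters: `f(1)=121, f(2)=123, f(3)=141, f(4)=142`
(letters `1,2,3,4` encoded as `0,1,2,3`). -/
def fm : A4 → List A4
  | 0 => [0, 1, 0]
  | 1 => [0, 1, 2]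
  | 2 => [0, 3, 0]
  | 3 => [0, 3, 1]

/-- The morphism `f` extended to words by concatenation. -/
def fw (u : List A4) : List A4 := u.flatMap fm

/-- The fixed point `w` of `f` starting with the letter `1`: since `|f^k(1)| = 3^k` and each
`f^k(1)` is a prefix of `f^(k+1)(1)`, the `n`-th letter of `w` is the `n`-th letter of
`f^(n+1)(1)`. -/
def w (n : ℕ) : A4 := ((fw^[n + 1]) [0]).getD n 0

/-- The finite word `t` occurs at position `i` in the infinite word `x`. -/
def OccursAt {α : Type*} (t : List α) (x : ℕ → α) (i : ℕ) : Prop :=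
  t = (List.range t.length).map fun k => x (i + k)

/-- The finite word `v` is a factor of the infinite word `x`. -/
def FactorOf {α : Type*} (v : List α) (x : ℕ → α) : Prop :=
  ∃ i, OccursAt v x i

/-- The finite word `v` has period `q ≥ 1`: `v(j) = v(j+q)` whenever `0 ≤ j < |v| - q`. -/
def HasPeriod {α : Type*} (v : List α) (q : ℕ) : Prop :=
  1 ≤ q ∧ ∀ j, j + q < v.length → v[j]? = v[j + q]?

/-- A word lies in `ker ψ` if each letter of `A₄` occurs in it a number of times
divisible by `4`. -/
def InKerPsi (u : List A4) : Prop := ∀ a : A4, 4 ∣ u.count a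

/-- `q` is a kernel period of `v`: `1 ≤ q ≤ |v|`, `v` has period `q`, and the prefix of `v`
of length `q` lies in `ker ψ`. -/
def KernelPeriod (v : List A4) (q : ℕ) : Prop :=
  q ≤ v.length ∧ HasPeriod v q ∧ InKerPsi (v.take q)

namespace List

variable {α β : Type*} {d : ℕ} {φ : α → List β}

theorem length_flatMap_of_length_eq (hφ : ∀ a, (φ a).length = d) (u : List α) :
    (u.flatMap φ).length = d * u.length := by
  simp [hφ, Nat.mul_comm]

theorem getElem?_flatMap_of_length_eq (hφ : ∀ a, (φ a).length = d) (u : List α) {n r : ℕ}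
    (hr : r < d) : (u.flatMap φ)[d * n + r]? = u[n]?.bind fun a => (φ a)[r]? := by
  induction u generalizing n with
  | nil => simp
  | cons a u ih =>
    rw [flatMap_cons]
    cases n with
    | zero => simp [getElem?_append_left (hφ a ▸ hr)]
    | succ n =>
      rw [getElem?_append_right (by rw [hφ a]; nlinarith), hφ a,
        show d * (n + 1) + r - d = d * n + r by rw [Nat.mul_succ]; omega]
      exact ih

theorem IsPrefix.getElem?_eq {l₁ l₂ : List α} (h : l₁ <+: l₂) {n : ℕ} (hn : n < l₁.length) :
    l₁[n]? = l₂[n]? := by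
  obtain ⟨t, rfl⟩ := h
  exact (getElem?_append_left hn).symm

end List

theorem length_fm (c : A4) : (fm c).length = 3 := by
  fin_cases c <;> rfl

theorem length_iterate_fw (m : ℕ) : (fw^[m] [0]).length = 3 ^ m := by
  induction m with
  | zero => rfl
  | succ m ih =>
    rw [Function.iterate_succ_apply', fw, List.length_flatMap_of_length_eq length_fm, ih,
      pow_succ, Nat.mul_comm]

theorem iterate_fw_prefix_succ (m : ℕ) : fw^[m] [0] <+: fw^[m + 1] [0] := by
  induction m with
  | zero => exact ⟨[1, 0], rfl⟩
  | succ m ih =>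
    rw [Function.iterate_succ_apply', Function.iterate_succ_apply' fw (m + 1)]
    exact ih.flatMap fm

theorem iterate_fw_prefix {m m' : ℕ} (h : m ≤ m') : fw^[m] [0] <+: fw^[m'] [0] := by
  induction h with
  | refl => exact List.prefix_rfl
  | step _ ih => exact ih.trans (iterate_fw_prefix_succ _)

theorem getElem?_iterate_fw {n m : ℕ} (h : n < 3 ^ m) : (fw^[m] [0])[n]? = some (w n) := by
  have hlen : ∀ {k}, n < 3 ^ k → n < (fw^[k] [0]).length :=
    fun hk => (length_iterate_fw _).symm ▸ hk
  have hn : n < 3 ^ (n + 1) := n.lt_succ_self.trans (Nat.lt_pow_self (by norm_num))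
  rw [(iterate_fw_prefix (le_max_left m (n + 1))).getElem?_eq (hlen h),
    ← (iterate_fw_prefix (le_max_right m (n + 1))).getElem?_eq (hlen hn),
    List.getElem?_eq_getElem (hlen hn), w, List.getD_eq_getElem _ _ (hlen hn)]

theorem getElem?_fm_w (k : ℕ) {r : ℕ} (hr : r < 3) : (fm (w k))[r]? = some (w (3 * k + r)) := by
  have hk : k < 3 ^ (k + 1) := k.lt_succ_self.trans (Nat.lt_pow_self (by norm_num))
  have hkr : 3 * k + r < 3 ^ (k + 2) := by rw [pow_succ]; omega
  rw [← getElem?_iterate_fw hkr, Function.iterate_succ_apply', fw,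
    List.getElem?_flatMap_of_length_eq length_fm _ hr, getElem?_iterate_fw hk, Option.bind_some]

theorem w_three_mul (k : ℕ) : w (3 * k) = 0 := by
  have h : ∀ c, (fm c)[0]? = some 0 := by decide
  simpa [h, eq_comm] using getElem?_fm_w k (r := 0) (by norm_num)

theorem w_three_mul_add_one_ne_zero (k : ℕ) : w (3 * k + 1) ≠ 0 := by
  have h : ∀ c, (fm c)[1]? ≠ some 0 := by decide
  exact fun h0 => h (w k) (h0 ▸ getElem?_fm_w k (by norm_num))

theorem w_sub_one_of_middle {i : ℕ} (hi : w i = 1 ∨ w i = 3) :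
    w (i - 1) = if w (i + 2) = 0 then 0 else 3 := by
  obtain ⟨k, r, hr, rfl⟩ : ∃ k r, r < 3 ∧ i = 3 * k + r :=
    ⟨i / 3, i % 3, Nat.mod_lt _ (by norm_num), (Nat.div_add_mod i 3).symm⟩
  interval_cases r
  · simp [w_three_mul] at hi
  · rw [Nat.add_sub_cancel, show 3 * k + 1 + 2 = 3 * (k + 1) by ring, w_three_mul, w_three_mul,
      if_pos rfl]
  · rw [show 3 * k + 2 + 2 = 3 * (k + 1) + 1 by ring, if_neg (w_three_mul_add_one_ne_zero _),
      show 3 * k + 2 - 1 = 3 * k + 1 by omega]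
    have h : ∀ c x y : A4, (fm c)[2]? = some x → (fm c)[1]? = some y → (x = 1 ∨ x = 3) →
        y = 3 := by decide
    exact h _ _ _ (getElem?_fm_w k (by norm_num)) (getElem?_fm_w k (by norm_num)) hi

theorem OccursAt.apply_add {α : Type*} {t : List α} {x : ℕ → α} {i : ℕ} (h : OccursAt t x i)
    {k : ℕ} (hk : k < t.length) : x (i + k) = t[k] := by
  rw [List.getElem_of_eq h hk]
  simp

theorem stmt10_general (s : List A4) (hs : s.length = 2) (a : A4) (hsuf : s <:+ fm a) (b : A4)
    (i j : ℕ) (hoi : OccursAt (s ++ [b]) w i)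
    (hoj : OccursAt (s ++ [b]) w j) :
    w (i - 1) = w (j - 1) := by
  obtain rfl : s = (fm a).drop 1 := by rw [List.suffix_iff_eq_drop.mp hsuf, hs, length_fm]
  have hmiddle : ∀ {i}, OccursAt ((fm a).drop 1 ++ [b]) w i → w i = 1 ∨ w i = 3 := by
    intro i h
    have := h.apply_add (k := 0) (by simp [length_fm])
    fin_cases a <;> simp_all [fm]
  have hlast : ∀ {i}, OccursAt ((fm a).drop 1 ++ [b]) w i → w (i + 2) = b := by
    intro i h
    simpa [length_fm] using h.apply_add (k := 2) (by simp [length_fm])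
  rw [w_sub_one_of_middle (hmiddle hoi), w_sub_one_of_middle (hmiddle hoj), hlast hoi, hlast hoj]

/-- If `s` is a length-2 suffix of the image of a letter and the length-3 word `s·b` occurs in
`w` at positions `i ≥ 1` and `j ≥ 1`, then the preceding letters agree: `w(i-1) = w(j-1)`. -/
theorem stmt10 (s : List A4) (hs : s.length = 2) (a : A4) (hsuf : s <:+ fm a) (b : A4)
    (i j : ℕ) (hi : 1 ≤ i) (hj : 1 ≤ j)
    (hoi : OccursAt (s ++ [b]) w i) (hoj : OccursAt (s ++ [b]) w j) :
    w (i - 1) = w (j - 1) :=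
  stmt10_general s hs a hsuf b i j hoi hoj
end

section
/- If v is a factor of w having a kernel period q with |v| ≥ q + 3, then 3 divides q and there exists a factor u of w having kernel period q/3 such that |v| ≤ 3|u| + 3 (hence |v|/q ≤ |u|/(q/3) + 1/(q/3)). -/
lemma fm_len (a : A4) : (fm a).length = 3 := by fin_cases a <;> rfl
lemma fw_cons (a : A4) (M : List A4) : fw (a :: M) = fm a ++ fw M := by simp [fw]
lemma fw_append (M N : List A4) : fw (M ++ N) = fw M ++ fw N := by simp [fw]
lemma fw_len (M : List A4) : (fw M).length = 3 * M.length := by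
  induction M with
  | nil => rfl
  | cons a M ih => simp [fw_cons, ih, fm_len]; ring
lemma fw_get? (M : List A4) (n j : ℕ) (hj : j < 3) (hn : n < M.length) :
    (fw M)[3*n+j]? = (fm (M.getD n 0))[j]? := by
  induction M generalizing n with
  | nil => simp at hn
  | cons a M ih =>
    cases n with
    | zero =>
      rw [fw_cons]
      rw [List.getElem?_append_left (by simp [fm_len]; omega)]
      simp
    | succ n =>
      rw [fw_cons]
      have h3 : 3*(n+1)+j = (fm a).length + (3*n+j) := by simp [fm_len]; ring
      rw [h3, List.getElem?_append_right (by omega)]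
      simp only [Nat.add_sub_cancel_left]
      rw [ih n (by simpa using hn)]
      simp

lemma iter_len (k : ℕ) : ((fw^[k]) [0] : List A4).length = 3^k := by
  induction k with
  | zero => rfl
  | succ k ih => rw [Function.iterate_succ_apply', fw_len, ih]; ring

lemma fw_prefix {M N : List A4} (h : M <+: N) : fw M <+: fw N := by
  obtain ⟨t, rfl⟩ := h
  exact ⟨fw t, (fw_append M t).symm⟩

lemma iter_prefix (k : ℕ) : ((fw^[k]) [0] : List A4) <+: (fw^[k+1]) [0] := by
  induction k with
  | zero => exact ⟨[1, 0], rfl⟩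
  | succ k ih =>
    rw [Function.iterate_succ_apply', Function.iterate_succ_apply' fw (k+1)]
    exact fw_prefix ih

lemma iter_prefix_le {k k' : ℕ} (h : k ≤ k') : ((fw^[k]) [0] : List A4) <+: (fw^[k']) [0] := by
  induction k' with
  | zero => simpa [Nat.le_zero.mp h]
  | succ k' ih =>
    rcases Nat.lt_or_ge k (k'+1) with h' | h'
    · exact (ih (by omega)).trans (iter_prefix k')
    · have : k = k' + 1 := by omega
      subst this; exact List.prefix_refl _

lemma getD_prefix {M N : List A4} (h : M <+: N) {n : ℕ} (hn : n < M.length) :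
    N.getD n 0 = M.getD n 0 := by
  obtain ⟨t, rfl⟩ := h
  simp [List.getD, List.getElem?_append_left hn]


lemma lt3pow (n : ℕ) : n < 3^n := by
  induction n with
  | zero => norm_num
  | succ n ih =>
    have : 3^(n+1) = 3 * 3^n := by ring
    omega

lemma lt3pow' {n k : ℕ} (h : n < k) : n < 3^k := by
  calc n < 3^n := lt3pow n
  _ ≤ 3^k := Nat.pow_le_pow_right (by norm_num) (by omega)

lemma getD_eq_some {L : List A4} {n : ℕ} (h : n < L.length) : L[n]? = some (L.getD n 0) := by
  simp [List.getD, List.getElem?_eq_getElem h]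

lemma w_eq (k n : ℕ) (h : n < 3^k) : ((fw^[k]) [0] : List A4).getD n 0 = w n := by
  rcases Nat.le_total k (n+1) with hk | hk
  · rw [w, getD_prefix (iter_prefix_le hk) (by rw [iter_len]; exact h)]
  · rw [w, getD_prefix (iter_prefix_le hk) (by rw [iter_len]; exact lt3pow' (by omega))]

lemma w_block (n j : ℕ) (hj : j < 3) : w (3*n+j) = (fm (w n)).getD j 0 := by
  have hb : 3*n+j < 3^(n+2) := by
    have h1 : n < 3^n := lt3pow n
    have h2 : 3^(n+2) = 9 * 3^n := by ring
    omega
  have hn : n < ((fw^[n+1]) [0] : List A4).length := by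
    rw [iter_len]; exact lt3pow' (by omega)
  have key := fw_get? ((fw^[n+1]) [0]) n j hj hn
  have hit : fw ((fw^[n+1]) [0]) = (fw^[n+2]) [0] := (Function.iterate_succ_apply' fw (n+1) [0]).symm
  rw [hit] at key
  have hlen2 : 3*n+j < ((fw^[n+2]) [0] : List A4).length := by rw [iter_len]; exact hb
  have hlhs : ((fw^[n+2]) [0] : List A4)[3*n+j]? = some (w (3*n+j)) := by
    rw [getD_eq_some hlen2, w_eq (n+2) (3*n+j) hb]
  have hw : ((fw^[n+1]) [0] : List A4).getD n 0 = w n :=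
    w_eq (n+1) n (lt3pow' (by omega))
  rw [hw] at key
  have hrhs : (fm (w n))[j]? = some ((fm (w n)).getD j 0) :=
    getD_eq_some (by rw [fm_len]; exact hj)
  rw [hlhs, hrhs] at key
  exact Option.some_injective _ key

lemma w_mul3 (n : ℕ) : w (3*n) = 0 := by
  have h := w_block n 0 (by omega)
  have : ∀ a : A4, (fm a).getD 0 0 = 0 := by decide
  simpa using h.trans (this (w n))

lemma w_mod1_ne (n : ℕ) : w (3*n+1) ≠ 0 := by
  have h := w_block n 1 (by omega)
  have : ∀ a : A4, (fm a).getD 1 0 ≠ 0 := by decide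
  rw [h]; exact this (w n)

lemma w_inj (a b : ℕ) (h1 : w (3*a+1) = w (3*b+1)) (h2 : w (3*a+2) = w (3*b+2)) :
    w a = w b := by
  rw [w_block a 1 (by omega), w_block b 1 (by omega)] at h1
  rw [w_block a 2 (by omega), w_block b 2 (by omega)] at h2
  revert h1 h2
  have : ∀ x y : A4, (fm x).getD 1 0 = (fm y).getD 1 0 → (fm x).getD 2 0 = (fm y).getD 2 0 → x = y := by decide
  exact this (w a) (w b)

/-- The window of `w` of length `m` starting at `t`. -/
def W (t m : ℕ) : List A4 := (List.range m).map (fun k => w (t+k))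

lemma W_len (t m : ℕ) : (W t m).length = m := by simp [W]

lemma W_get? (t m j : ℕ) (h : j < m) : (W t m)[j]? = some (w (t+j)) := by
  simp [W, List.getElem?_map, List.getElem?_range h]

lemma W_succ_left (t m : ℕ) : W t (m+1) = w t :: W (t+1) m := by
  simp only [W, List.range_succ_eq_map, List.map_map, Function.comp, List.map_cons]
  congr 1
  apply List.map_congr_left; intro k _; simp; congr 1; omega

lemma W_succ_right (t m : ℕ) : W t (m+1) = W t m ++ [w (t+m)] := by
  simp [W, List.range_succ]

lemma count_W_shift (t m : ℕ) (a : A4) (h : w t = w (t+m)) :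
    (W (t+1) m).count a = (W t m).count a := by
  have h1 := congrArg (List.count a) (W_succ_left t m)
  have h2 := congrArg (List.count a) (W_succ_right t m)
  rw [h1] at h2
  simp [List.count_cons, List.count_append, h] at h2
  omega

lemma fm_expand (x : A4) : fm x = [(fm x).getD 0 0, (fm x).getD 1 0, (fm x).getD 2 0] := by
  revert x; decide

lemma fw_W (t m : ℕ) : fw (W t m) = W (3*t) (3*m) := by
  induction m with
  | zero => simp [W, fw]
  | succ m ih =>
    rw [W_succ_right, fw_append, ih]
    have h1 : fw [w (t+m)] = fm (w (t+m)) := by simp [fw]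
    have h2 : fm (w (t+m)) = [w (3*(t+m)), w (3*(t+m)+1), w (3*(t+m)+2)] := by
      rw [fm_expand (w (t+m))]
      rw [← w_block (t+m) 0 (by omega), ← w_block (t+m) 1 (by omega),
        ← w_block (t+m) 2 (by omega)]
      norm_num
    rw [h1, h2]
    have e3 : 3*(m+1) = (3*m+1)+1+1 := by ring
    rw [e3, W_succ_right, W_succ_right, W_succ_right, List.append_assoc, List.append_assoc]
    congr 1
    have triple : ∀ (x y z x' y' z' : A4), x = x' → y = y' → z = z' →
        ([x, y, z] : List A4) = ([x'] ++ ([y'] ++ [z'])) := by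
      intros x y z x' y' z' hx hy hz; subst hx; subst hy; subst hz; rfl
    exact triple _ _ _ _ _ _ (congrArg w (by ring)) (congrArg w (by ring)) (congrArg w (by ring))

lemma count_fw (P : List A4) (a : A4) :
    (fw P).count a = (P.count 0) * ((fm 0).count a) + (P.count 1) * ((fm 1).count a)
      + (P.count 2) * ((fm 2).count a) + (P.count 3) * ((fm 3).count a) := by
  induction P with
  | nil => simp [fw]
  | cons b P ih =>
    rw [fw_cons, List.count_append, ih]
    have hb : b = 0 ∨ b = 1 ∨ b = 2 ∨ b = 3 := by fin_cases b <;> simp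
    rcases hb with rfl | rfl | rfl | rfl <;>
      simp [List.count_cons] <;> ring

lemma W_take (t m k : ℕ) (h : k ≤ m) : (W t m).take k = W t k := by
  simp [W, ← List.map_take, List.take_range, Nat.min_eq_left h]

/-- If `v` is a factor of `w` having a kernel period `q` with `|v| ≥ q + 3`, then `3 ∣ q` and
there is a factor `u` of `w` having kernel period `q/3` with `|v| ≤ 3|u| + 3`. -/
theorem stmt12 (v : List A4) (q : ℕ) (hfac : FactorOf v w) (hker : KernelPeriod v q)
    (hlen : q + 3 ≤ v.length) :
    3 ∣ q ∧ ∃ u : List A4, FactorOf u w ∧ KernelPeriod u (q / 3) ∧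
      v.length ≤ 3 * u.length + 3 := by
  obtain ⟨i, hocc⟩ := hfac
  obtain ⟨hqle, ⟨hq1, hper⟩, hkpsi⟩ := hker
  set L := v.length with hL
  have hv : v = W i L := hocc
  -- period in terms of w
  have hperw' : ∀ p, i ≤ p → p + q < i + L → w p = w (p + q) := by
    intro p h1 h2
    have hp := hper (p - i) (by omega)
    rw [hv, W_get? i L (p-i) (by omega), W_get? i L (p-i+q) (by omega)] at hp
    have e1 : i + (p - i) = p := by omega
    have e2 : i + (p - i + q) = p + q := by omega
    rw [e1, e2] at hp
    exact Option.some_injective _ hp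
  -- 3 ∣ q
  have h3q : 3 ∣ q := by
    have hm : q % 3 = 0 ∨ q % 3 = 1 ∨ q % 3 = 2 := by omega
    rcases hm with h | h | h
    · omega
    · exfalso
      set j := (3 - i % 3) % 3 with hjd
      obtain ⟨a, ha⟩ : ∃ a, i + j = 3*a := ⟨(i+j)/3, by omega⟩
      obtain ⟨b, hb⟩ : ∃ b, i + j + q = 3*b + 1 := ⟨(i+j+q)/3, by omega⟩
      have hp := hperw' (i+j) (by omega) (by omega)
      rw [ha, show 3*a+q = 3*b+1 from by omega, w_mul3] at hp
      exact w_mod1_ne b hp.symm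
    · exfalso
      set j := (4 - i % 3) % 3 with hjd
      obtain ⟨a, ha⟩ : ∃ a, i + j = 3*a + 1 := ⟨(i+j)/3, by omega⟩
      obtain ⟨b, hb⟩ : ∃ b, i + j + q = 3*b := ⟨(i+j+q)/3, by omega⟩
      have hp := hperw' (i+j) (by omega) (by omega)
      rw [ha, show 3*a+1+q = 3*b from by omega, w_mul3] at hp
      exact w_mod1_ne a hp
  obtain ⟨q', hq'⟩ := h3q
  set s := (i+1)/3 with hsd
  set e := (i+L)/3 with hed
  set m := e - s with hmd
  refine ⟨⟨q', hq'⟩, W s m, ?_, ?_, ?_⟩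
  · -- factor of w
    refine ⟨s, ?_⟩
    unfold OccursAt
    rw [W_len]
    rfl
  · -- kernel period
    have hq3 : q / 3 = q' := by omega
    rw [hq3]
    refine ⟨by rw [W_len]; omega, ⟨by omega, ?_⟩, ?_⟩
    · -- period q'
      intro j hj
      rw [W_len] at hj
      rw [W_get? s m j (by omega), W_get? s m (j+q') (by omega)]
      have p1 : w (3*(s+j)+1) = w (3*(s+j)+1+q) :=
        hperw' (3*(s+j)+1) (by omega) (by omega)
      have p2 : w (3*(s+j)+2) = w (3*(s+j)+2+q) :=
        hperw' (3*(s+j)+2) (by omega) (by omega)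
      rw [show 3*(s+j)+1+q = 3*(s+j+q')+1 from by omega] at p1
      rw [show 3*(s+j)+2+q = 3*(s+j+q')+2 from by omega] at p2
      have := w_inj (s+j) (s+j+q') p1 p2
      rw [show s+(j+q') = s+j+q' from by omega]
      exact congrArg _ this
    · -- kernel
      rw [W_take s m q' (by omega)]
      have hbase : ∀ a : A4, 4 ∣ (W i q).count a := by
        intro a
        have := hkpsi a
        rwa [hv, W_take i L q (by omega)] at this
      have hshift : ∀ a : A4, 4 ∣ (W (3*s) q).count a := by
        intro a
        have hcase : 3*s = i ∨ 3*s = i + 1 ∨ 3*s + 1 = i := by omega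
        rcases hcase with hc | hc | hc
        · rw [hc]; exact hbase a
        · have hsh := count_W_shift i q a (hperw' i (le_refl i) (by omega))
          rw [hc, hsh]; exact hbase a
        · have hw0 : w (3*s) = w (3*s + q) := by
            rw [show 3*s+q = 3*(s+q') from by omega, w_mul3, w_mul3]
          have hsh := count_W_shift (3*s) q a hw0
          rw [← hc] at hbase
          rw [← hsh]; exact hbase a
      have hfwP : fw (W s q') = W (3*s) q := by
        rw [fw_W, ← hq']
      have k0 := hshift 0; have k1 := hshift 1; have k2 := hshift 2; have k3 := hshift 3
      rw [← hfwP, count_fw] at k0 k1 k2 k3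
      have t00 : ((fm 0).count 0) = 2 := by decide
      have t01 : ((fm 1).count 0) = 1 := by decide
      have t02 : ((fm 2).count 0) = 2 := by decide
      have t03 : ((fm 3).count 0) = 1 := by decide
      have t10 : ((fm 0).count 1) = 1 := by decide
      have t11 : ((fm 1).count 1) = 1 := by decide
      have t12 : ((fm 2).count 1) = 0 := by decide
      have t13 : ((fm 3).count 1) = 1 := by decide
      have t20 : ((fm 0).count 2) = 0 := by decide
      have t21 : ((fm 1).count 2) = 1 := by decide
      have t22 : ((fm 2).count 2) = 0 := by decide
      have t23 : ((fm 3).count 2) = 0 := by decide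
      have t30 : ((fm 0).count 3) = 0 := by decide
      have t31 : ((fm 1).count 3) = 0 := by decide
      have t32 : ((fm 2).count 3) = 1 := by decide
      have t33 : ((fm 3).count 3) = 1 := by decide
      rw [t00, t01, t02, t03] at k0
      rw [t10, t11, t12, t13] at k1
      rw [t20, t21, t22, t23] at k2
      rw [t30, t31, t32, t33] at k3
      intro a
      have hc : 4 ∣ (W s q').count 0 ∧ 4 ∣ (W s q').count 1 ∧
          4 ∣ (W s q').count 2 ∧ 4 ∣ (W s q').count 3 := by
        refine ⟨?_, ?_, ?_, ?_⟩ <;> omega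
      have ha : a = 0 ∨ a = 1 ∨ a = 2 ∨ a = 3 := by fin_cases a <;> simp
      rcases ha with rfl|rfl|rfl|rfl <;> tauto
  · rw [W_len]; omega
end
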